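/- arXiv:0912.3333 — 11 statements merged into one kernel-verified Lean document; each statement's English description precedes it below -/
import Mathlib

section
/- Let M, K be coprime positive integers, let δ : ℤ → ℂ, and let g : ℤ × ℤ → ℂ (written g_n^s). Define f^t_{m,n} := g_n^{tK−mM} for all t,m,n ∈ ℤ. Then f automatically satisfies the (M,K)-reduction constraint f^t_{m,n} = f^{t−M}_{m−K,n} for all t,m,n; and f satisfies the non-autonomous discrete KP equation with coefficients a(t)=0, b(m)=1, c(n)=1+δ_{n+1}, namely −δ_{n+1}·f^{t+1}_{m,n} f^t_{m+1,n+1} + (1+δ_{n+1})·f^t_{m+1,n} f^{t+1}_{m,n+1} − f^t_{m,n+1} f^{t+1}_{m+1,n} = 0 for all t,m,n ∈ ℤ, if and only if g satisfies the reduced bilinear equation (1+δ_{n+1})·g_n^s g_{n+1}^{s+M+K} = g_{n+1}^{s+M} g_n^{s+K} + δ_{n+1}·g_n^{s+M+K} g_{n+1}^s for all s,n ∈ ℤ. -/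
/-!
Under `f^t_{m,n} = g_n^{tK-mM}` the six values of `f` in the ndKP equation at `(t, m, n)` are
the six values of `g` in the reduced equation at `s = tK - (m+1)M`, and the ndKP left-hand side
is exactly the difference of the two sides of the reduced equation. Coprimality makes
`(t, m) ↦ tK - (m+1)M` onto `ℤ`, so every instance of the reduced equation is reached.
-/

theorem Int.exists_mul_sub_mul_eq_of_isCoprime {M K : ℤ} (h : IsCoprime M K) (s : ℤ) :
    ∃ t m : ℤ, t * K - m * M = s := by
  obtain ⟨a, b, hab⟩ := h
  exact ⟨b * s, -(a * s), by linear_combination s * hab⟩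

theorem reduction_constraint {α : Type*} {M K : ℤ} {g : ℤ → ℤ → α} {f : ℤ → ℤ → ℤ → α}
    (hf : ∀ t m n, f t m n = g n (t * K - m * M)) (t m n : ℤ) :
    f t m n = f (t - M) (m - K) n := by
  rw [hf, hf]
  congr 1
  ring

theorem ndKP_eq_reduced_sub {R : Type*} [CommRing R] {M K : ℤ} {g : ℤ → ℤ → R}
    {f : ℤ → ℤ → ℤ → R} (δ : ℤ → R) (hf : ∀ t m n, f t m n = g n (t * K - m * M))
    (t m n : ℤ) :
    -δ (n + 1) * (f (t + 1) m n * f t (m + 1) (n + 1)) +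
        (1 + δ (n + 1)) * (f t (m + 1) n * f (t + 1) m (n + 1)) -
        f t m (n + 1) * f (t + 1) (m + 1) n =
      let s := t * K - (m + 1) * M
      (1 + δ (n + 1)) * (g n s * g (n + 1) (s + M + K)) -
        (g (n + 1) (s + M) * g n (s + K) + δ (n + 1) * (g n (s + M + K) * g (n + 1) s)) := by
  simp only [hf]
  rw [show (t + 1) * K - m * M = t * K - (m + 1) * M + M + K by ring,
    show t * K - m * M = t * K - (m + 1) * M + M by ring,
    show (t + 1) * K - (m + 1) * M = t * K - (m + 1) * M + K by ring]
  ring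

theorem reduced_ndKP_bilinear_iff_general (M K : ℕ)
    (hMK : Nat.Coprime M K) (δ : ℤ → ℂ) (g : ℤ → ℤ → ℂ) (f : ℤ → ℤ → ℤ → ℂ)
    (hf : ∀ t m n : ℤ, f t m n = g n (t * K - m * M)) :
    (∀ t m n : ℤ, f t m n = f (t - M) (m - K) n) ∧
    ((∀ t m n : ℤ,
        -δ (n + 1) * (f (t + 1) m n * f t (m + 1) (n + 1)) +
          (1 + δ (n + 1)) * (f t (m + 1) n * f (t + 1) m (n + 1)) -
          f t m (n + 1) * f (t + 1) (m + 1) n = 0) ↔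
      (∀ s n : ℤ,
        (1 + δ (n + 1)) * (g n s * g (n + 1) (s + M + K)) =
          g (n + 1) (s + M) * g n (s + K) +
            δ (n + 1) * (g n (s + M + K) * g (n + 1) s))) := by
  refine ⟨reduction_constraint hf, ?_⟩
  simp only [ndKP_eq_reduced_sub δ hf, sub_eq_zero]
  refine ⟨fun h s n => ?_, fun h t m n => h _ n⟩
  obtain ⟨t, m, hs⟩ :=
    Int.exists_mul_sub_mul_eq_of_isCoprime (Nat.isCoprime_iff_coprime.mpr hMK) (s + M)
  simpa [show t * K - (m + 1) * M = s by linarith] using h t m n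

/-- The substitution `f^t_{m,n} = g_n^{tK - mM}` automatically satisfies the
`(M,K)`-reduction constraint, and (given `gcd(M,K)=1`) `f` satisfies the non-autonomous
discrete KP equation with coefficients `a(t)=0`, `b(m)=1`, `c(n)=1+δ_{n+1}` iff `g`
satisfies the reduced bilinear equation. -/
theorem reduced_ndKP_bilinear_iff (M K : ℕ) (hM : 0 < M) (hK : 0 < K)
    (hMK : Nat.Coprime M K) (δ : ℤ → ℂ) (g : ℤ → ℤ → ℂ) (f : ℤ → ℤ → ℤ → ℂ)
    (hf : ∀ t m n : ℤ, f t m n = g n (t * K - m * M)) :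
    (∀ t m n : ℤ, f t m n = f (t - M) (m - K) n) ∧
    ((∀ t m n : ℤ,
        -δ (n + 1) * (f (t + 1) m n * f t (m + 1) (n + 1)) +
          (1 + δ (n + 1)) * (f t (m + 1) n * f (t + 1) m (n + 1)) -
          f t m (n + 1) * f (t + 1) (m + 1) n = 0) ↔
      (∀ s n : ℤ,
        (1 + δ (n + 1)) * (g n s * g (n + 1) (s + M + K)) =
          g (n + 1) (s + M) * g n (s + K) +
            δ (n + 1) * (g n (s + M + K) * g (n + 1) s))) :=
  reduced_ndKP_bilinear_iff_general M K hMK δ g f hf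
end

section
/- Let M, K be positive integers, let δ : ℤ → ℂ, and let g : ℤ × ℤ → ℂ (written g_n^t) be nowhere vanishing. Define I_n^t := (1+δ_{n+1})·g_n^t g_{n+1}^{t+K} / (g_{n+1}^t g_n^{t+K}) and V_n^t := δ_{n+1}·g_n^{t+K} g_{n+1}^{t−M+K} / (g_{n+1}^{t+K} g_n^{t−M+K}). If g satisfies the reduced bilinear equation (1+δ_{n+1})·g_n^s g_{n+1}^{s+M+K} = g_{n+1}^{s+M} g_n^{s+K} + δ_{n+1}·g_n^{s+M+K} g_{n+1}^s for all s,n ∈ ℤ, then I_n^t = I_{n−1}^{t−M} + V_n^{t−K} − V_{n−1}^t for all n,t ∈ ℤ (equation (kdv1) of the (M,K)-reduced non-autonomous discrete KP equation). -/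
/-!
Both `I_n^t - V_n^{t-K}` and `I_{n-1}^{t-M} - V_{n-1}^t` equal
`g_n^t g_n^{t-M+K} / (g_n^{t+K} g_n^{t-M})`: each is the bilinear equation at `s = t - M`
(at `n` resp. `n - 1`) divided by `g_n^{t-M} g_n^{t+K}` and by the remaining factors of `I`.
-/

namespace ReducedKdV

variable {F : Type*} [Field F] (M K : ℤ) (δ : ℤ → F) (g : ℤ → ℤ → F)

def I (n t : ℤ) : F :=
  (1 + δ (n + 1)) * (g n t * g (n + 1) (t + K)) / (g (n + 1) t * g n (t + K))

def V (n t : ℤ) : F :=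
  δ (n + 1) * (g n (t + K) * g (n + 1) (t - M + K)) / (g (n + 1) (t + K) * g n (t - M + K))

def IsBilinearSolution : Prop :=
  ∀ s n : ℤ, (1 + δ (n + 1)) * (g n s * g (n + 1) (s + M + K)) =
    g (n + 1) (s + M) * g n (s + K) + δ (n + 1) * (g n (s + M + K) * g (n + 1) s)

variable {M K δ g}

theorem I_sub_V_sub_eq (hg : ∀ n t, g n t ≠ 0) (hbil : IsBilinearSolution M K δ g) (n t : ℤ) :
    I K δ g n t - V M K δ g n (t - K) =
      g n t * g n (t - M + K) / (g n (t + K) * g n (t - M)) := by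
  have h := hbil (t - M) n
  rw [show t - M + M + K = t + K by ring, show t - M + M = t by ring] at h
  rw [I, V, show t - K + K = t by ring, show t - K - M + K = t - M by ring]
  field_simp [hg]
  linear_combination h

theorem I_pred_sub_V_pred_eq (hg : ∀ n t, g n t ≠ 0) (hbil : IsBilinearSolution M K δ g)
    (n t : ℤ) :
    I K δ g (n - 1) (t - M) - V M K δ g (n - 1) t =
      g n t * g n (t - M + K) / (g n (t + K) * g n (t - M)) := by
  have h := hbil (t - M) (n - 1)
  rw [show t - M + M + K = t + K by ring, show t - M + M = t by ring,
    show n - 1 + 1 = n by ring] at h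
  rw [I, V, show n - 1 + 1 = n by ring]
  field_simp [hg]
  linear_combination h

theorem kdv1 (hg : ∀ n t, g n t ≠ 0) (hbil : IsBilinearSolution M K δ g) (n t : ℤ) :
    I K δ g n t = I K δ g (n - 1) (t - M) + V M K δ g n (t - K) - V M K δ g (n - 1) t := by
  linear_combination I_sub_V_sub_eq hg hbil n t - I_pred_sub_V_pred_eq hg hbil n t

end ReducedKdV

theorem kdv1_of_bilinear_general (M K : ℕ)
    (δ : ℤ → ℂ) (g : ℤ → ℤ → ℂ) (hg : ∀ n t : ℤ, g n t ≠ 0)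
    (I V : ℤ → ℤ → ℂ)
    (hI : ∀ n t : ℤ, I n t =
      (1 + δ (n + 1)) * (g n t * g (n + 1) (t + K)) / (g (n + 1) t * g n (t + K)))
    (hV : ∀ n t : ℤ, V n t =
      δ (n + 1) * (g n (t + K) * g (n + 1) (t - M + K)) /
        (g (n + 1) (t + K) * g n (t - M + K)))
    (hbil : ∀ s n : ℤ,
      (1 + δ (n + 1)) * (g n s * g (n + 1) (s + M + K)) =
        g (n + 1) (s + M) * g n (s + K) +
          δ (n + 1) * (g n (s + M + K) * g (n + 1) s)) :
    ∀ n t : ℤ, I n t = I (n - 1) (t - M) + V n (t - K) - V (n - 1) t := by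
  obtain rfl : I = ReducedKdV.I K δ g := funext₂ hI
  obtain rfl : V = ReducedKdV.V M K δ g := funext₂ hV
  exact ReducedKdV.kdv1 hg hbil

/-- With `I_n^t` and `V_n^t` defined from a nowhere vanishing `g`, if `g`
satisfies the reduced bilinear equation then (kdv1) holds:
`I_n^t = I_{n-1}^{t-M} + V_n^{t-K} - V_{n-1}^t`. -/
theorem kdv1_of_bilinear (M K : ℕ) (hM : 0 < M) (hK : 0 < K)
    (δ : ℤ → ℂ) (g : ℤ → ℤ → ℂ) (hg : ∀ n t : ℤ, g n t ≠ 0)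
    (I V : ℤ → ℤ → ℂ)
    (hI : ∀ n t : ℤ, I n t =
      (1 + δ (n + 1)) * (g n t * g (n + 1) (t + K)) / (g (n + 1) t * g n (t + K)))
    (hV : ∀ n t : ℤ, V n t =
      δ (n + 1) * (g n (t + K) * g (n + 1) (t - M + K)) /
        (g (n + 1) (t + K) * g n (t - M + K)))
    (hbil : ∀ s n : ℤ,
      (1 + δ (n + 1)) * (g n s * g (n + 1) (s + M + K)) =
        g (n + 1) (s + M) * g n (s + K) +
          δ (n + 1) * (g n (s + M + K) * g (n + 1) s)) :
    ∀ n t : ℤ, I n t = I (n - 1) (t - M) + V n (t - K) - V (n - 1) t :=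
  kdv1_of_bilinear_general M K δ g hg I V hI hV hbil
end

section
/- Let M, K, N be positive integers with N ≥ 2, and let I, V : ℤ × ℤ → ℂ (written I_n^t, V_n^t) satisfy the periodicity I_{n+N}^t = I_n^t, V_{n+N}^t = V_n^t. Fix t ∈ ℤ. Then the matrix equation L_t(y) R_t(y) = R_{t−M}(y) L_{t−K}(y) holds for every y ∈ ℂ if and only if for every n ∈ ℤ one has I_n^t V_n^t = I_n^{t−M} V_n^{t−K} and I_{n+1}^t + V_n^t = I_n^{t−M} + V_{n+1}^{t−K}; the latter two families of equations are exactly the periodic (M,K)-reduced non-autonomous discrete KP equations (kdv2) and (kdv1) at time t. -/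
/-!
Write each Lax matrix as `diagonal d + S(y)`, where `S(y)` holds the superdiagonal ones and the
corner entry `y`. The terms `S(y) * S(y)` occur on both sides of the Lax equation and cancel, so
entrywise it says: `V_n I_n = I'_n V'_n` on the diagonal, and `V_n + I_{n+1} = I'_n + V'_{n+1}` at
the positions `(i, i + 1 mod N)` where `S(y)` is nonzero. By periodicity these `2N` equations are
the rndKP equations at every `n ∈ ℤ`.
-/

/-- The `N×N` matrix with diagonal entries `d 1, …, d N`, entries `1` on the
superdiagonal, entry `y` in the lower-left corner, and `0` elsewhere. -/
def bandM (N : ℕ) (d : ℤ → ℂ) (y : ℂ) : Matrix (Fin N) (Fin N) ℂ :=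
  Matrix.of fun i j =>
    (if i = j then d ((i : ℕ) + 1 : ℕ) else 0) +
    (if (i : ℕ) + 1 = (j : ℕ) then 1 else 0) +
    (if (i : ℕ) = N - 1 ∧ (j : ℕ) = 0 then y else 0)

open Matrix Function

theorem Function.Periodic.eq_of_intModEq {α : Type*} {f : ℤ → α} {N : ℤ} (hf : Periodic f N)
    {a b : ℤ} (h : a ≡ b [ZMOD N]) : f a = f b := by
  obtain ⟨k, hk⟩ := h.dvd
  rw [← (hf.int_mul k) a]
  congr 1
  rw [Int.cast_id]
  linarith

theorem Function.Periodic.apply_natCast_mod_add {α : Type*} {f : ℤ → α} {N : ℕ}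
    (hf : Periodic f N) (m : ℕ) (k : ℤ) : f ((m % N : ℕ) + k) = f (m + k) :=
  hf.eq_of_intModEq (by push_cast; exact (Int.mod_modEq _ _).add_right k)

theorem Function.Periodic.forall_of_forall_fin {P : ℤ → Prop} {N : ℕ} (hN : 0 < N)
    (hP : Periodic P N) (h : ∀ i : Fin N, P i) (n : ℤ) : P n := by
  have h0 := Int.emod_nonneg n (by omega : (N : ℤ) ≠ 0)
  have h1 := Int.emod_lt_of_pos n (by omega : (0 : ℤ) < N)
  have hmod : P (n % N) := by simpa [h0] using h ⟨(n % N).toNat, by omega⟩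
  rwa [hP.eq_of_intModEq (Int.mod_modEq n N)] at hmod

theorem Matrix.diagonal_add_mul_diagonal_add_apply {n R : Type*} [Fintype n] [DecidableEq n]
    [CommSemiring R] (a b : n → R) (S : Matrix n n R) (i j : n) :
    ((diagonal a + S) * (diagonal b + S)) i j =
      diagonal (a * b) i j + S i j * (a i + b j) + (S * S) i j := by
  simp only [add_mul, mul_add, diagonal_mul_diagonal, diagonal_mul, mul_diagonal, add_apply,
    Pi.mul_def]
  ring

theorem Matrix.diagonal_add_mul_diagonal_add_eq_iff {n R : Type*} [Fintype n] [DecidableEq n]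
    [CommRing R] (a b c e : n → R) (S : Matrix n n R) :
    (diagonal a + S) * (diagonal b + S) = (diagonal c + S) * (diagonal e + S) ↔
      ∀ i j, diagonal (a * b) i j + S i j * (a i + b j) =
        diagonal (c * e) i j + S i j * (c i + e j) := by
  simp only [← Matrix.ext_iff, diagonal_add_mul_diagonal_add_apply, add_left_inj]

def cyclicShift (N : ℕ) (y : ℂ) : Matrix (Fin N) (Fin N) ℂ :=
  Matrix.of fun i j =>
    (if (i : ℕ) + 1 = (j : ℕ) then 1 else 0) +
    (if (i : ℕ) = N - 1 ∧ (j : ℕ) = 0 then y else 0)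

theorem bandM_eq_diagonal_add_cyclicShift (N : ℕ) (d : ℤ → ℂ) (y : ℂ) :
    bandM N d y = diagonal (fun i : Fin N => d (((i : ℕ) : ℤ) + 1)) + cyclicShift N y := by
  ext i j
  simp only [bandM, cyclicShift, of_apply, Matrix.add_apply, diagonal_apply]
  push_cast
  ring

theorem cyclicShift_zero_apply_self {N : ℕ} (i : Fin N) : cyclicShift N 0 i i = 0 := by
  simp [cyclicShift]

theorem cyclicShift_one_apply_succ {N : ℕ} (i : Fin N) :
    cyclicShift N 1 i ⟨((i : ℕ) + 1) % N, Nat.mod_lt _ i.pos⟩ = 1 := by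
  have := i.isLt
  rcases (show (i : ℕ) + 1 < N ∨ (i : ℕ) + 1 = N by omega) with hlt | heq
  · simp [cyclicShift, Nat.mod_eq_of_lt hlt]
  · simp only [cyclicShift, of_apply, heq, Nat.mod_self]
    simp [show N ≠ 0 by omega, show (i : ℕ) = N - 1 by omega]

theorem val_eq_of_cyclicShift_apply_ne_zero {N : ℕ} {y : ℂ} {i j : Fin N}
    (h : cyclicShift N y i j ≠ 0) : (j : ℕ) = ((i : ℕ) + 1) % N := by
  have := j.isLt
  by_cases h₁ : (i : ℕ) + 1 = j
  · rw [← h₁, Nat.mod_eq_of_lt (by omega)]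
  · have h₂ : (i : ℕ) = N - 1 ∧ (j : ℕ) = 0 := by
      by_contra h₂
      simp [cyclicShift, h₁, h₂] at h
    rw [show (i : ℕ) + 1 = N by omega, Nat.mod_self, h₂.2]

theorem bandM_mul_bandM_eq_iff {N : ℕ} (hN : 0 < N) {a b c e : ℤ → ℂ} (ha : Periodic a N)
    (hb : Periodic b N) (hc : Periodic c N) (he : Periodic e N) :
    (∀ y, bandM N a y * bandM N b y = bandM N c y * bandM N e y) ↔
      ∀ n, a n * b n = c n * e n ∧ a n + b (n + 1) = c n + e (n + 1) := by
  simp only [bandM_eq_diagonal_add_cyclicShift, diagonal_add_mul_diagonal_add_eq_iff]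
  constructor
  · intro h
    have kdv2 (i : Fin N) : a (i + 1) * b (i + 1) = c (i + 1) * e (i + 1) := by
      simpa [cyclicShift_zero_apply_self] using h 0 i i
    have kdv1 (i : Fin N) : a (i + 1) + b (i + 1 + 1) = c (i + 1) + e (i + 1 + 1) := by
      have h_succ := h 1 i ⟨((i : ℕ) + 1) % N, Nat.mod_lt _ i.pos⟩
      rw [show _ * _ = _ * _ from funext kdv2, add_right_inj, cyclicShift_one_apply_succ,
        one_mul, one_mul, Fin.val_mk, hb.apply_natCast_mod_add, he.apply_natCast_mod_add] at h_succ
      exact_mod_cast h_succ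
    have hP : Periodic (fun n => a n * b n = c n * e n ∧ a n + b (n + 1) = c n + e (n + 1)) N :=
      fun n => by
        simp only [add_right_comm n (N : ℤ) 1, ha n, hb n, hc n, he n, hb (n + 1), he (n + 1)]
    intro n
    simpa using (hP.add_const 1).forall_of_forall_fin hN (fun i => ⟨kdv2 i, kdv1 i⟩) (n - 1)
  · intro h y i j
    rw [show _ * _ = _ * _ from funext fun i : Fin N => (h _).1, add_right_inj]
    by_cases hS : cyclicShift N y i j = 0
    · simp [hS]
    · rw [val_eq_of_cyclicShift_apply_ne_zero hS, hb.apply_natCast_mod_add,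
        he.apply_natCast_mod_add]
      push_cast
      rw [(h _).2]

theorem lax_iff_rndKP_general (M K N : ℕ) (hN : 2 ≤ N)
    (I V : ℤ → ℤ → ℂ)
    (hIper : ∀ n t : ℤ, I (n + N) t = I n t)
    (hVper : ∀ n t : ℤ, V (n + N) t = V n t)
    (t : ℤ) :
    (∀ y : ℂ,
        bandM N (fun n => V n t) y * bandM N (fun n => I n t) y =
          bandM N (fun n => I n (t - M)) y * bandM N (fun n => V n (t - K)) y) ↔
    (∀ n : ℤ,
        I n t * V n t = I n (t - M) * V n (t - K) ∧
        I (n + 1) t + V n t = I n (t - M) + V (n + 1) (t - K)) := by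
  rw [bandM_mul_bandM_eq_iff (by omega) (hVper · t) (hIper · t) (hIper · (t - M))
    (hVper · (t - K))]
  exact forall_congr' fun n => by rw [mul_comm (V n t), add_comm (V n t)]

/-- For periodic families `I_n^t`, `V_n^t` and fixed `t`, the Lax matrix
equation `L_t(y) R_t(y) = R_{t-M}(y) L_{t-K}(y)` for all `y` is equivalent to the
periodic rndKP equations (kdv2) and (kdv1) at time `t`. -/
theorem lax_iff_rndKP (M K N : ℕ) (hM : 0 < M) (hK : 0 < K) (hN : 2 ≤ N)
    (I V : ℤ → ℤ → ℂ)
    (hIper : ∀ n t : ℤ, I (n + N) t = I n t)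
    (hVper : ∀ n t : ℤ, V (n + N) t = V n t)
    (t : ℤ) :
    (∀ y : ℂ,
        bandM N (fun n => V n t) y * bandM N (fun n => I n t) y =
          bandM N (fun n => I n (t - M)) y * bandM N (fun n => V n (t - K)) y) ↔
    (∀ n : ℤ,
        I n t * V n t = I n (t - M) * V n (t - K) ∧
        I (n + 1) t + V n t = I n (t - M) + V (n + 1) (t - K)) :=
  lax_iff_rndKP_general M K N hN I V hIper hVper t
end

section
/- Let M, K, N be positive integers and let (L_s)_{s∈ℤ} and (R_s)_{s∈ℤ} be families of N×N complex matrices satisfying L_s R_s = R_{s−M} L_{s−K} for every s ∈ ℤ. Define X_t := L_{t−(K−1)M} ⋯ L_{t−2M} L_{t−M} L_t · R_t R_{t−K} R_{t−2K} ⋯ R_{t−(M−1)K}. Then for every t ∈ ℤ one has X_t R_{t−MK} = R_{t−MK} X_{t−K}. -/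
/-!
Appending `R_{t-MK}` to the `R`-block of `X_t` gives the same product as prepending `R_t` to the
`R`-block of `X_{t-K}`. The Lax relation pushes an `R`-factor leftwards past an `L`-factor,
lowering the index of `R` by `M` and that of `L` by `K`; moving `R_t` through the `K` factors
`L_t, L_{t-M}, …, L_{t-(K-1)M}` therefore turns it into `R_{t-KM}` and shifts the whole `L`-block
of `X_t` to that of `X_{t-K}`.
-/

theorem List.prod_map_reverse_range_mul_of_intertwine {G : Type*} [Monoid G] (a b c : ℕ → G)
    (h : ∀ j, a j * c j = c (j + 1) * b j) (n : ℕ) :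
    ((List.range n).reverse.map a).prod * c 0 = c n * ((List.range n).reverse.map b).prod := by
  induction n with
  | zero => simp
  | succ n ih =>
    simp only [List.range_succ, List.reverse_append, List.reverse_singleton, List.singleton_append,
      List.map_cons, List.prod_cons]
    rw [mul_assoc, ih, ← mul_assoc, h, mul_assoc]

theorem Xt_R_commutation_general (M K N : ℕ)
    (L R : ℤ → Matrix (Fin N) (Fin N) ℂ)
    (hLax : ∀ s : ℤ, L s * R s = R (s - M) * L (s - K))
    (X : ℤ → Matrix (Fin N) (Fin N) ℂ)
    (hX : ∀ t : ℤ, X t =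
      (((List.range K).reverse.map fun j => L (t - (j : ℤ) * (M : ℤ))).prod) *
      (((List.range M).map fun j => R (t - (j : ℤ) * (K : ℤ))).prod)) :
    ∀ t : ℤ, X t * R (t - (M : ℤ) * (K : ℤ)) = R (t - (M : ℤ) * (K : ℤ)) * X (t - K) := by
  intro t
  -- `(j : ℤ)` in `hX` is elaborated by coercing the lists `List.range _ : List ℕ` to `List ℤ`
  -- through the list monad.
  simp only [hX, bind_pure_comp, List.map_eq_map, List.map_map, Function.comp_def]
  have hL := List.prod_map_reverse_range_mul_of_intertwine (fun j : ℕ => L (t - j * M))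
    (fun j : ℕ => L (t - K - j * M)) (fun j : ℕ => R (t - j * M))
    (fun j => by simpa [add_mul, sub_sub, sub_right_comm _ _ (K : ℤ)] using hLax (t - j * M)) K
  have hR := (List.prod_range_succ (fun j : ℕ => R (t - j * K)) M).symm.trans
    (List.prod_range_succ' _ M)
  have hshift (j : ℕ) : t - ((j + 1 : ℕ) : ℤ) * K = t - K - j * K := by push_cast; ring
  simp only [Nat.cast_zero, zero_mul, sub_zero, hshift] at hL hR
  rw [mul_assoc, hR, ← mul_assoc, hL, mul_comm (K : ℤ), mul_assoc]

/-- If `L_s R_s = R_{s-M} L_{s-K}` for all `s`, then the ordered product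
`X_t = L_{t-(K-1)M} ⋯ L_{t-M} L_t · R_t R_{t-K} ⋯ R_{t-(M-1)K}` satisfies
`X_t R_{t-MK} = R_{t-MK} X_{t-K}`. -/
theorem Xt_R_commutation (M K N : ℕ) (hM : 0 < M) (hK : 0 < K) (hN : 0 < N)
    (L R : ℤ → Matrix (Fin N) (Fin N) ℂ)
    (hLax : ∀ s : ℤ, L s * R s = R (s - M) * L (s - K))
    (X : ℤ → Matrix (Fin N) (Fin N) ℂ)
    (hX : ∀ t : ℤ, X t =
      (((List.range K).reverse.map fun j => L (t - (j : ℤ) * (M : ℤ))).prod) *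
      (((List.range M).map fun j => R (t - (j : ℤ) * (K : ℤ))).prod)) :
    ∀ t : ℤ, X t * R (t - (M : ℤ) * (K : ℤ)) = R (t - (M : ℤ) * (K : ℤ)) * X (t - K) :=
  Xt_R_commutation_general M K N L R hLax X hX
end

section
/- Let M, K, N be positive integers and let (L_s)_{s∈ℤ} and (R_s)_{s∈ℤ} be families of N×N complex matrices satisfying L_s R_s = R_{s−M} L_{s−K} for every s ∈ ℤ. Define X_t := L_{t−(K−1)M} ⋯ L_{t−2M} L_{t−M} L_t · R_t R_{t−K} R_{t−2K} ⋯ R_{t−(M−1)K}. Then for every t ∈ ℤ one has L_{t−MK} X_t = X_{t−M} L_{t−MK}. -/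
/-!
Write `X t = A t * B t` with `A t` the product of the `L`'s and `B t` that of the `R`'s.
Left multiplication by `L (t - MK)` extends the chain of `L`'s in `A t` by one more step of `M`;
peeling off its rightmost factor shows `L (t - MK) * A t = A (t - M) * L t`. Applying the
exchange relation `L s R s = R (s - M) L (s - K)` `M` times then moves `L t` through `B t`, which
shifts every `R` by `-M` and leaves `L (t - MK)` on the right: `L t * B t = B (t - M) * L (t - MK)`.
-/

open List

section Monoid

variable {G : Type*} [Monoid G]

theorem List.prod_map_reverse_range_succ (f : ℕ → G) (n : ℕ) :
    ((range (n + 1)).reverse.map f).prod = f n * ((range n).reverse.map f).prod := by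
  simp [range_succ]

theorem List.prod_map_reverse_range_succ' (f : ℕ → G) (n : ℕ) :
    ((range (n + 1)).reverse.map f).prod =
      ((range n).reverse.map fun i => f (i + 1)).prod * f 0 := by
  simp [range_succ_eq_map, map_reverse, Function.comp_def]

theorem mul_prod_map_reverse_range (f : ℕ → G) (n : ℕ) :
    f n * ((range n).reverse.map f).prod =
      ((range n).reverse.map fun i => f (i + 1)).prod * f 0 := by
  rw [← prod_map_reverse_range_succ, prod_map_reverse_range_succ']

theorem mul_prod_map_range_of_exchange {a b : ℤ → G} {p q : ℤ}
    (h : ∀ s, a s * b s = b (s - p) * a (s - q)) (n : ℕ) (t : ℤ) :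
    a t * ((range n).map fun j : ℕ => b (t - j * q)).prod =
      ((range n).map fun j : ℕ => b (t - p - j * q)).prod * a (t - n * q) := by
  induction n with
  | zero => simp
  | succ n ih =>
    have hstep : t - n * q - q = t - (n + 1 : ℕ) * q := by push_cast; ring
    have hshift : t - n * q - p = t - p - n * q := by ring
    simp only [prod_range_succ]
    rw [← mul_assoc, ih, mul_assoc, h, hstep, hshift, mul_assoc]

end Monoid

theorem L_Xt_commutation_general (M K N : ℕ)
    (L R : ℤ → Matrix (Fin N) (Fin N) ℂ)
    (hLax : ∀ s : ℤ, L s * R s = R (s - M) * L (s - K))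
    (X : ℤ → Matrix (Fin N) (Fin N) ℂ)
    (hX : ∀ t : ℤ, X t =
      (((List.range K).reverse.map fun j => L (t - (j : ℤ) * (M : ℤ))).prod) *
      (((List.range M).map fun j => R (t - (j : ℤ) * (K : ℤ))).prod)) :
    ∀ t : ℤ, L (t - (M : ℤ) * (K : ℤ)) * X t = X (t - M) * L (t - (M : ℤ) * (K : ℤ)) := by
  intro t
  have hA := mul_prod_map_reverse_range (fun j : ℕ => L (t - j * M)) K
  have hB := mul_prod_map_range_of_exchange hLax M t
  -- in `hX` the index `j` is an integer, so `List.range K` enters through the `List ℕ → List ℤ`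
  -- coercion `l >>= pure ∘ Nat.cast`
  simp only [hX, bind_pure_comp, map_eq_map, map_map, Function.comp_def]
  simp only [Nat.cast_add, Nat.cast_one, Nat.cast_zero, zero_mul, sub_zero] at hA
  calc L (t - M * K) * (((range K).reverse.map fun j : ℕ => L (t - j * M)).prod *
          ((range M).map fun j : ℕ => R (t - j * K)).prod)
      = ((range K).reverse.map fun j : ℕ => L (t - M - j * M)).prod *
          (L t * ((range M).map fun j : ℕ => R (t - j * K)).prod) := by
        rw [← mul_assoc, mul_comm (M : ℤ), hA, mul_assoc]
        congr 3; funext j; congr 1; ring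
    _ = _ := by rw [hB, ← mul_assoc]

/-- If `L_s R_s = R_{s-M} L_{s-K}` for all `s`, then the ordered product
`X_t = L_{t-(K-1)M} ⋯ L_{t-M} L_t · R_t R_{t-K} ⋯ R_{t-(M-1)K}` satisfies
`L_{t-MK} X_t = X_{t-M} L_{t-MK}`. -/
theorem L_Xt_commutation (M K N : ℕ) (hM : 0 < M) (hK : 0 < K) (hN : 0 < N)
    (L R : ℤ → Matrix (Fin N) (Fin N) ℂ)
    (hLax : ∀ s : ℤ, L s * R s = R (s - M) * L (s - K))
    (X : ℤ → Matrix (Fin N) (Fin N) ℂ)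
    (hX : ∀ t : ℤ, X t =
      (((List.range K).reverse.map fun j => L (t - (j : ℤ) * (M : ℤ))).prod) *
      (((List.range M).map fun j => R (t - (j : ℤ) * (K : ℤ))).prod)) :
    ∀ t : ℤ, L (t - (M : ℤ) * (K : ℤ)) * X t = X (t - M) * L (t - (M : ℤ) * (K : ℤ)) :=
  L_Xt_commutation_general M K N L R hLax X hX
end

section
/- Let M, K, N be positive integers and let (L_s)_{s∈ℤ} and (R_s)_{s∈ℤ} be families of N×N complex matrices satisfying L_s R_s = R_{s−M} L_{s−K} for every s ∈ ℤ. Define X_t := L_{t−(K−1)M} ⋯ L_{t−2M} L_{t−M} L_t · R_t R_{t−K} R_{t−2K} ⋯ R_{t−(M−1)K}. Then for every t ∈ ℤ one also has the alternative factorisation X_t = R_{t−MK} R_{t−(M+1)K} ⋯ R_{t−(2M−1)K} · L_{t−(2K−1)M} ⋯ L_{t−(K+1)M} L_{t−KM}, where the R-factors are ordered with indices t−(M+j)K for j = 0,1,…,M−1 from left to right, and the L-factors with indices t−(K+j)M for j = K−1,…,1,0 from left to right. -/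
/-!
Read `L s * R s = R (s - a) * L (s - b)` as a rule for moving one `R` leftwards past one `L`:
the `R` is shifted by `a` and the `L` by `b`. Moving `R_s` through the descending string
`L_{s-(k-1)a} ⋯ L_s` shifts it by `k a` and the whole string by `b`; moving the string of `K`
factors `L` through the `M` factors `R` one at a time then shifts every `R` by `K M` and every
`L` by `M K`.
-/

section StridedProd

variable {G : Type*} [Monoid G]

/-- `f s * f (s - d) * ⋯ * f (s - (n - 1) d)`. -/
def stridedProd (f : ℤ → G) (s d : ℤ) (n : ℕ) : G :=
  ((List.range n).map fun j : ℕ => f (s - j * d)).prod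

/-- `f (s - (n - 1) d) * ⋯ * f (s - d) * f s`. -/
def stridedProdRev (f : ℤ → G) (s d : ℤ) (n : ℕ) : G :=
  ((List.range n).reverse.map fun j : ℕ => f (s - j * d)).prod

theorem stridedProd_succ (f : ℤ → G) (s d : ℤ) (n : ℕ) :
    stridedProd f s d (n + 1) = stridedProd f s d n * f (s - n * d) := by
  simp [stridedProd, List.range_succ]

theorem stridedProdRev_succ (f : ℤ → G) (s d : ℤ) (n : ℕ) :
    stridedProdRev f s d (n + 1) = f (s - n * d) * stridedProdRev f s d n := by
  simp [stridedProdRev, List.range_succ]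

variable {L R : ℤ → G} {a b : ℤ}

theorem stridedProdRev_mul_of_lax (hLax : ∀ s, L s * R s = R (s - a) * L (s - b))
    (s : ℤ) (k : ℕ) :
    stridedProdRev L s a k * R s = R (s - k * a) * stridedProdRev L (s - b) a k := by
  induction k with
  | zero => simp [stridedProdRev]
  | succ k ih =>
    rw [stridedProdRev_succ, stridedProdRev_succ, mul_assoc, ih, ← mul_assoc, hLax, mul_assoc,
      show s - k * a - a = s - ((k + 1 : ℕ) : ℤ) * a by push_cast; ring,
      show s - k * a - b = s - b - k * a by ring]

theorem stridedProdRev_mul_stridedProd_of_lax (hLax : ∀ s, L s * R s = R (s - a) * L (s - b))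
    (s : ℤ) (k m : ℕ) :
    stridedProdRev L s a k * stridedProd R s b m =
      stridedProd R (s - k * a) b m * stridedProdRev L (s - m * b) a k := by
  induction m with
  | zero => simp [stridedProd]
  | succ m ih =>
    rw [stridedProd_succ, stridedProd_succ, ← mul_assoc, ih, mul_assoc,
      stridedProdRev_mul_of_lax hLax, ← mul_assoc]
    rw [show s - m * b - k * a = s - k * a - m * b by ring,
      show s - m * b - b = s - ((m + 1 : ℕ) : ℤ) * b by push_cast; ring]

end StridedProd

theorem Xt_alternative_factorisation_general (M K N : ℕ)
    (L R : ℤ → Matrix (Fin N) (Fin N) ℂ)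
    (hLax : ∀ s : ℤ, L s * R s = R (s - M) * L (s - K))
    (X : ℤ → Matrix (Fin N) (Fin N) ℂ)
    (hX : ∀ t : ℤ, X t =
      (((List.range K).reverse.map fun j => L (t - (j : ℤ) * (M : ℤ))).prod) *
      (((List.range M).map fun j => R (t - (j : ℤ) * (K : ℤ))).prod)) :
    ∀ t : ℤ, X t =
      (((List.range M).map fun j => R (t - ((M : ℤ) + (j : ℤ)) * (K : ℤ))).prod) *
      (((List.range K).reverse.map fun j => L (t - ((K : ℤ) + (j : ℤ)) * (M : ℤ))).prod) := by
  intro t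
  -- the index lists are `List ℕ` lifted to `List ℤ` through the list monad
  simp only [bind_pure_comp, List.map_eq_map, List.map_map, Function.comp_def] at hX ⊢
  have hX' : X t = stridedProdRev L t M K * stridedProd R t K M := hX t
  rw [hX', stridedProdRev_mul_stridedProd_of_lax hLax, stridedProd, stridedProdRev]
  congr 3 <;> funext j <;> congr 1 <;> ring

/-- If `L_s R_s = R_{s-M} L_{s-K}` for all `s`, then the product
`X_t = L_{t-(K-1)M} ⋯ L_t · R_t ⋯ R_{t-(M-1)K}` admits the alternative factorisation
`X_t = R_{t-MK} R_{t-(M+1)K} ⋯ R_{t-(2M-1)K} · L_{t-(2K-1)M} ⋯ L_{t-(K+1)M} L_{t-KM}`. -/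
theorem Xt_alternative_factorisation (M K N : ℕ) (hM : 0 < M) (hK : 0 < K) (hN : 0 < N)
    (L R : ℤ → Matrix (Fin N) (Fin N) ℂ)
    (hLax : ∀ s : ℤ, L s * R s = R (s - M) * L (s - K))
    (X : ℤ → Matrix (Fin N) (Fin N) ℂ)
    (hX : ∀ t : ℤ, X t =
      (((List.range K).reverse.map fun j => L (t - (j : ℤ) * (M : ℤ))).prod) *
      (((List.range M).map fun j => R (t - (j : ℤ) * (K : ℤ))).prod)) :
    ∀ t : ℤ, X t =
      (((List.range M).map fun j => R (t - ((M : ℤ) + (j : ℤ)) * (K : ℤ))).prod) *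
      (((List.range K).reverse.map fun j => L (t - ((K : ℤ) + (j : ℤ)) * (M : ℤ))).prod) :=
  Xt_alternative_factorisation_general M K N L R hLax X hX
end

section
/- Let M, K, N be positive integers with gcd(M,K) = 1 and N ≥ 2, and let I, V : ℤ × ℤ → ℂ (written I_n^t, V_n^t) satisfy the periodicity I_{n+N}^t = I_n^t, V_{n+N}^t = V_n^t and the Lax equations L_s(y) R_s(y) = R_{s−M}(y) L_{s−K}(y) for all s ∈ ℤ and all y ∈ ℂ. Then the characteristic polynomial of X_t(y) is independent of t: for every t ∈ ℤ and every y ∈ ℂ, the matrices X_t(y) and X_{t+1}(y) have the same characteristic polynomial. -/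
/-- The Lax matrix
`X_t(y) = L_{t-(K-1)M}(y) ⋯ L_{t-M}(y) L_t(y) · R_t(y) R_{t-K}(y) ⋯ R_{t-(M-1)K}(y)`,
where `L_s(y) = bandM N (V · s) y` and `R_s(y) = bandM N (I · s) y`. -/
noncomputable def XmatM (M K N : ℕ) (I V : ℤ → ℤ → ℂ) (t : ℤ) (y : ℂ) : Matrix (Fin N) (Fin N) ℂ :=
  (((List.range K).reverse.map fun j =>
      bandM N (fun n => V n (t - (j : ℤ) * (M : ℤ))) y).prod) *
  (((List.range M).map fun j =>
      bandM N (fun n => I n (t - (j : ℤ) * (K : ℤ))) y).prod)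

/-!
Write `χ` for the characteristic polynomial, `P_t = L_{t-(K-1)M} ⋯ L_t` and
`Q_t = R_t ⋯ R_{t-(M-1)K}`, so that `X_t = P_t Q_t`. Iterating the Lax relation
`L_s R_s = R_{s-M} L_{s-K}` moves a single `R` leftwards through all of `P`, and a single `L`
leftwards through all of `Q`. Together with `χ(AB) = χ(BA)`, cycling one `L` (resp. one `R`)
around the product gives `χ(X_t) = χ(X_{t+M})` and `χ(X_t) = χ(X_{t+K})`; Bézout for the
coprime `M`, `K` gives `χ(X_t) = χ(X_{t+1})`.
-/

section Products

variable {G : Type*} [Monoid G] (A : ℤ → G) (s : ℤ)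

/-- `A (t - (k-1)s) * ⋯ * A (t - s) * A t` -/
def leftProd (k : ℕ) (t : ℤ) : G :=
  ((List.range k).reverse.map fun j => A (t - j * s)).prod

/-- `A t * A (t - s) * ⋯ * A (t - (m-1)s)` -/
def rightProd (m : ℕ) (t : ℤ) : G :=
  ((List.range m).map fun j => A (t - j * s)).prod

@[simp] lemma leftProd_zero (t : ℤ) : leftProd A s 0 t = 1 := rfl

@[simp] lemma rightProd_zero (t : ℤ) : rightProd A s 0 t = 1 := rfl

lemma leftProd_succ (k : ℕ) (t : ℤ) :
    leftProd A s (k + 1) t = A (t - k * s) * leftProd A s k t := by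
  simp [leftProd, List.range_succ]

lemma rightProd_succ (m : ℕ) (t : ℤ) :
    rightProd A s (m + 1) t = rightProd A s m t * A (t - m * s) := by
  simp [rightProd, List.range_succ]

lemma leftProd_succ' (k : ℕ) (t : ℤ) :
    leftProd A s (k + 1) t = leftProd A s k (t - s) * A t := by
  induction k generalizing t with
  | zero => simp [leftProd]
  | succ k ih =>
    rw [leftProd_succ, ih, leftProd_succ, ← mul_assoc]
    congr 3
    push_cast
    ring

lemma rightProd_succ' (m : ℕ) (t : ℤ) :
    rightProd A s (m + 1) t = A t * rightProd A s m (t - s) := by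
  induction m generalizing t with
  | zero => simp [rightProd]
  | succ m ih =>
    rw [rightProd_succ, ih, rightProd_succ, mul_assoc]
    congr 3
    push_cast
    ring

end Products

section Lax

variable {G : Type*} [Monoid G] {L R : ℤ → G} {M K : ℤ}

lemma leftProd_mul_of_lax (hLax : ∀ s, L s * R s = R (s - M) * L (s - K)) (k : ℕ) (t : ℤ) :
    leftProd L M k t * R t = R (t - k * M) * leftProd L M k (t - K) := by
  induction k generalizing t with
  | zero => simp
  | succ k ih =>
    calc leftProd L M (k + 1) t * R t
        = L (t - k * M) * (leftProd L M k t * R t) := by rw [leftProd_succ, mul_assoc]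
      _ = (L (t - k * M) * R (t - k * M)) * leftProd L M k (t - K) := by rw [ih, mul_assoc]
      _ = R (t - (k + 1 : ℕ) * M) * (L (t - K - k * M) * leftProd L M k (t - K)) := by
        rw [hLax, mul_assoc]
        push_cast
        ring_nf
      _ = R (t - (k + 1 : ℕ) * M) * leftProd L M (k + 1) (t - K) := by rw [leftProd_succ]

lemma rightProd_mul_of_lax (hLax : ∀ s, L s * R s = R (s - M) * L (s - K)) (m : ℕ) (t : ℤ) :
    rightProd R K m (t - M) * L (t - m * K) = L t * rightProd R K m t := by
  induction m generalizing t with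
  | zero => simp
  | succ m ih =>
    calc rightProd R K (m + 1) (t - M) * L (t - (m + 1 : ℕ) * K)
        = rightProd R K m (t - M) * (R (t - m * K - M) * L (t - m * K - K)) := by
          rw [rightProd_succ, mul_assoc]
          push_cast
          ring_nf
      _ = L t * rightProd R K m t * R (t - m * K) := by rw [← hLax, ← mul_assoc, ih]
      _ = L t * rightProd R K (m + 1) t := by rw [rightProd_succ, mul_assoc]

end Lax

section Charpoly

open Matrix

variable {n α : Type*} [Fintype n] [DecidableEq n] [CommRing α]
  {L R : ℤ → Matrix n n α} {M K : ℕ}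

/-- The Lax matrix `X_t = P_t Q_t`. -/
def laxMatrix (L R : ℤ → Matrix n n α) (M K : ℕ) (t : ℤ) : Matrix n n α :=
  leftProd L M K t * rightProd R K M t

lemma periodic_charpoly_laxMatrix_M (hK : 0 < K)
    (hLax : ∀ s, L s * R s = R (s - M) * L (s - K)) :
    Function.Periodic (fun t => (laxMatrix L R M K t).charpoly) (M : ℤ) := by
  obtain ⟨k, rfl⟩ := Nat.exists_eq_add_one_of_ne_zero hK.ne'
  intro t
  simp only [laxMatrix]
  have hfront :
      leftProd L M (k + 1) t = L (t + M - (M : ℤ) * (k + 1 : ℕ)) * leftProd L M k t := by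
    rw [leftProd_succ]; push_cast; ring_nf
  calc (leftProd L M (k + 1) (t + M) * rightProd R (k + 1 : ℕ) M (t + M)).charpoly
      = (rightProd R (k + 1 : ℕ) M (t + M) * leftProd L M k t * L (t + M)).charpoly := by
        rw [charpoly_mul_comm, leftProd_succ', add_sub_cancel_right, mul_assoc]
    _ = (rightProd R (k + 1 : ℕ) M (t + M - M) * L (t + M - (M : ℤ) * (k + 1 : ℕ)) *
          leftProd L M k t).charpoly := by
        rw [charpoly_mul_comm, ← mul_assoc, ← rightProd_mul_of_lax hLax, mul_assoc]
    _ = (leftProd L M (k + 1) t * rightProd R (k + 1 : ℕ) M t).charpoly := by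
        rw [add_sub_cancel_right, mul_assoc, charpoly_mul_comm, hfront]

lemma periodic_charpoly_laxMatrix_K (hM : 0 < M)
    (hLax : ∀ s, L s * R s = R (s - M) * L (s - K)) :
    Function.Periodic (fun t => (laxMatrix L R M K t).charpoly) (K : ℤ) := by
  obtain ⟨m, rfl⟩ := Nat.exists_eq_add_one_of_ne_zero hM.ne'
  intro t
  simp only [laxMatrix]
  have hback : R (t + K - (K : ℤ) * (m + 1 : ℕ)) = R (t - m * K) := by
    push_cast; ring_nf
  calc (leftProd L (m + 1 : ℕ) K (t + K) * rightProd R K (m + 1) (t + K)).charpoly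
      = (leftProd L (m + 1 : ℕ) K (t + K) * R (t + K) * rightProd R K m t).charpoly := by
        rw [rightProd_succ', add_sub_cancel_right, mul_assoc]
    _ = (R (t + K - (K : ℤ) * (m + 1 : ℕ)) * (leftProd L (m + 1 : ℕ) K t *
          rightProd R K m t)).charpoly := by
        rw [leftProd_mul_of_lax hLax, add_sub_cancel_right, mul_assoc]
    _ = (leftProd L (m + 1 : ℕ) K t * rightProd R K (m + 1) t).charpoly := by
        rw [charpoly_mul_comm, hback, mul_assoc, ← rightProd_succ]

lemma periodic_charpoly_laxMatrix_one (hM : 0 < M) (hK : 0 < K) (hMK : Nat.Coprime M K)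
    (hLax : ∀ s, L s * R s = R (s - M) * L (s - K)) :
    Function.Periodic (fun t => (laxMatrix L R M K t).charpoly) 1 := by
  obtain ⟨u, v, huv⟩ := Nat.isCoprime_iff_coprime.mpr hMK
  rw [← huv]
  exact ((periodic_charpoly_laxMatrix_M hK hLax).int_mul u).add_period
    ((periodic_charpoly_laxMatrix_K hM hLax).int_mul v)

end Charpoly

theorem charpoly_time_invariant_general (M K N : ℕ) (hM : 0 < M) (hK : 0 < K)
    (hMK : Nat.Coprime M K)
    (I V : ℤ → ℤ → ℂ)
    (hLax : ∀ (s : ℤ) (y : ℂ),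
      bandM N (fun n => V n s) y * bandM N (fun n => I n s) y =
        bandM N (fun n => I n (s - M)) y * bandM N (fun n => V n (s - K)) y) :
    ∀ (t : ℤ) (y : ℂ),
      (XmatM M K N I V t y).charpoly = (XmatM M K N I V (t + 1) y).charpoly := by
  intro t y
  let L s := bandM N (fun n => V n s) y
  let R s := bandM N (fun n => I n s) y
  have hX : ∀ u, XmatM M K N I V u y = laxMatrix L R M K u := fun _ => rfl
  rw [hX, hX]
  exact (periodic_charpoly_laxMatrix_one hM hK hMK (hLax · y) t).symm

/-- Under the periodic Lax equations and `gcd(M,K)=1`, the characteristic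
polynomial of `X_t(y)` does not depend on `t`. -/
theorem charpoly_time_invariant (M K N : ℕ) (hM : 0 < M) (hK : 0 < K)
    (hMK : Nat.Coprime M K) (hN : 2 ≤ N)
    (I V : ℤ → ℤ → ℂ)
    (hIper : ∀ n t : ℤ, I (n + N) t = I n t)
    (hVper : ∀ n t : ℤ, V (n + N) t = V n t)
    (hLax : ∀ (s : ℤ) (y : ℂ),
      bandM N (fun n => V n s) y * bandM N (fun n => I n s) y =
        bandM N (fun n => I n (s - M)) y * bandM N (fun n => V n (s - K)) y) :
    ∀ (t : ℤ) (y : ℂ),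
      (XmatM M K N I V t y).charpoly = (XmatM M K N I V (t + 1) y).charpoly :=
  charpoly_time_invariant_general M K N hM hK hMK I V hLax
end

section
/- Let L be a positive integer, let I_1, …, I_L ∈ ℂ and E_1, …, E_L ∈ ℂ, and let R* be the L×L complex matrix with (k,k) entry I_k for k = 1,…,L−1, (k,k+1) entry 1 for k = 1,…,L−1, last row (E_1, E_2, …, E_{L−1}, I_L + E_L), and all other entries 0. Set z_0 := 1 and z_n := I_1 I_2 ⋯ I_n for 1 ≤ n ≤ L. Then det R* = (−1)^{L+1} · ( ∑_{k=1}^{L} (−1)^{k+1} E_k z_{k−1} + (−1)^{L+1} z_L ), i.e. det R* = (−1)^{L+1}( E_1 − E_2 z_1 + E_3 z_2 − ⋯ + (−1)^{L+1} E_L z_{L−1} + (−1)^{L+1} z_L ). -/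
/-! Expand `det R*` along its first column. Only the entries `I 1` (top) and `E 1` (bottom) are
nonzero there; the top minor is `R*` for the shifted sequences `I (· + 1)`, `E (· + 1)`, and the
bottom minor is lower unitriangular. Hence `det R*_{n+1} = I 1 · det R*_n + (-1)^n E 1`, which
unrolls by induction to the closed form. -/

/-- The `L×L` matrix (2.16): diagonal entries `I 1, …, I (L-1)` in the first `L-1` rows,
entries `1` on the superdiagonal, last row `(E 1, …, E (L-1), I L + E L)`,
and `0` elsewhere. -/
def RstarM (L : ℕ) (I E : ℕ → ℂ) : Matrix (Fin L) (Fin L) ℂ :=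
  Matrix.of fun i j =>
    if (i : ℕ) = L - 1 then
      (if (j : ℕ) = L - 1 then I L + E L else E ((j : ℕ) + 1))
    else if i = j then I ((i : ℕ) + 1)
    else if (i : ℕ) + 1 = (j : ℕ) then 1 else 0

open Finset

namespace RstarM

variable (I E : ℕ → ℂ)

theorem submatrix_succ_succ (n : ℕ) :
    (RstarM (n + 1) I E).submatrix Fin.succ Fin.succ =
      RstarM n (fun m => I (m + 1)) (fun m => E (m + 1)) := by
  ext i j
  simp only [RstarM, Matrix.submatrix_apply, Matrix.of_apply, Fin.val_succ, Fin.ext_iff]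
  split_ifs <;> first | rfl | omega

theorem det_submatrix_castSucc_succ (n : ℕ) :
    ((RstarM (n + 1) I E).submatrix Fin.castSucc Fin.succ).det = 1 := by
  rw [Matrix.det_of_isLowerTriangular]
  · refine prod_eq_one fun i _ => ?_
    simp [RstarM, Fin.ext_iff, i.isLt.ne]
  · intro i j hij
    have : (i : ℕ) < j := hij
    simp only [RstarM, Matrix.submatrix_apply, Matrix.of_apply, Fin.val_succ, Fin.val_castSucc,
      Fin.ext_iff]
    split_ifs <;> first | rfl | omega

theorem apply_zero_zero (n : ℕ) : RstarM (n + 2) I E 0 0 = I 1 := by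
  simp [RstarM]

theorem apply_last_zero (n : ℕ) : RstarM (n + 2) I E (Fin.last _) 0 = E 1 := by
  simp [RstarM]

theorem apply_zero_eq_zero {n : ℕ} {i : Fin (n + 2)} (h0 : i ≠ 0) (hl : i ≠ Fin.last _) :
    RstarM (n + 2) I E i 0 = 0 := by
  have hl' : (i : ℕ) ≠ n + 1 := fun h => hl (Fin.ext h)
  rw [RstarM, Matrix.of_apply, if_neg (by omega), if_neg h0, if_neg (by simp)]

theorem det_succ (n : ℕ) :
    (RstarM (n + 1) I E).det =
      I 1 * (RstarM n (fun m => I (m + 1)) (fun m => E (m + 1))).det + (-1) ^ n * E 1 := by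
  cases n with
  | zero => simp [RstarM]
  | succ n =>
    rw [Matrix.det_succ_column_zero, Fintype.sum_eq_add 0 (Fin.last _) (by simp [Fin.ext_iff])]
    · rw [Fin.succAbove_zero, submatrix_succ_succ, Fin.succAbove_last,
        det_submatrix_castSucc_succ, apply_zero_zero, apply_last_zero]
      simp
    · rintro i ⟨h0, hl⟩
      rw [apply_zero_eq_zero I E h0 hl, mul_zero, zero_mul]

theorem det_eq (L : ℕ) :
    (RstarM L I E).det =
      ∑ k ∈ range L, (-1) ^ (L + 1 + k) * E (k + 1) * ∏ j ∈ range k, I (j + 1) +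
        ∏ j ∈ range L, I (j + 1) := by
  induction L generalizing I E with
  | zero => simp
  | succ n ih =>
    have hterm (k : ℕ) :
        (-1) ^ (n + 1 + 1 + (k + 1)) * E (k + 1 + 1) * ∏ j ∈ range (k + 1), I (j + 1) =
          I 1 * ((-1) ^ (n + 1 + k) * E (k + 1 + 1) * ∏ j ∈ range k, I (j + 1 + 1)) := by
      rw [prod_range_succ']
      ring
    rw [det_succ, ih, sum_range_succ', prod_range_succ' _ n, mul_add, mul_sum]
    simp only [hterm, prod_range_zero]
    ring

end RstarM

theorem det_Rstar_cofactor_general (L : ℕ) (I E : ℕ → ℂ)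
    (z : ℕ → ℂ) (hz : ∀ n : ℕ, z n = ∏ k ∈ Finset.range n, I (k + 1)) :
    (RstarM L I E).det =
      (-1 : ℂ) ^ (L + 1) *
        ((∑ k ∈ Finset.range L, (-1 : ℂ) ^ k * E (k + 1) * z k) +
          (-1 : ℂ) ^ (L + 1) * z L) := by
  have hsq : (-1 : ℂ) ^ (L + 1) * (-1) ^ (L + 1) = 1 := by
    rw [← mul_pow, neg_one_mul, neg_neg, one_pow]
  simp only [RstarM.det_eq, hz, mul_add, mul_sum, ← mul_assoc, hsq, one_mul, ← pow_add]

/-- the cofactor expansion of `det R*` along the last row: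
`det R* = (-1)^{L+1} (E_1 - E_2 z_1 + E_3 z_2 - ⋯ + (-1)^{L+1} E_L z_{L-1}
+ (-1)^{L+1} z_L)` with `z_n = I_1 ⋯ I_n`, `z_0 = 1`. -/
theorem det_Rstar_cofactor (L : ℕ) (hL : 0 < L) (I E : ℕ → ℂ)
    (z : ℕ → ℂ) (hz : ∀ n : ℕ, z n = ∏ k ∈ Finset.range n, I (k + 1)) :
    (RstarM L I E).det =
      (-1 : ℂ) ^ (L + 1) *
        ((∑ k ∈ Finset.range L, (-1 : ℂ) ^ k * E (k + 1) * z k) +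
          (-1 : ℂ) ^ (L + 1) * z L) :=
  det_Rstar_cofactor_general L I E z hz
end

section
/- Let L be a positive integer and let ξ_1, …, ξ_L : ℤ → ℂ, and let B be the bracket on nonempty words over {s,m} defined recursively by B([s], i) := 1, B([m], i) := ξ_1(i), B(s·χ, i) := B(χ, i+1), and B(m·χ, i) := ξ_l(i)·B(χ, i) for χ of length l−1 ≥ 1, where l is the length of the new word and letters are prepended on the left. Then for every word χ of length l with 1 ≤ l ≤ L−1 containing exactly k letters 's', and every i ∈ ℤ, one has B(χ·m, i) = B(χ·s, i) · ξ_1(i+k), where χ·m and χ·s denote the words obtained by appending the letter m (resp. s) on the right of χ. -/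
/-! The identity `B(χm, i) = B(χs, i) · ξ_1(i + k)` already holds for the empty word, where it
reads `B([m], i) = B([s], i) · ξ_1(i)`, and it propagates along prepended letters: prepending `m`
multiplies both sides on the left by the same `ξ_l(i)`, while
prepending `s` shifts `i` by one and raises the count of `s` by one. -/

theorem bracket_append_false_eq_mul {M : Type*} [Monoid M] (ξ : ℕ → ℤ → M)
    (B : List Bool → ℤ → M)
    (hBs : ∀ i : ℤ, B [true] i = 1)
    (hBm : ∀ i : ℤ, B [false] i = ξ 1 i)
    (hBsw : ∀ (χ : List Bool) (i : ℤ), χ ≠ [] → B (true :: χ) i = B χ (i + 1))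
    (hBmw : ∀ (χ : List Bool) (i : ℤ), χ ≠ [] →
      B (false :: χ) i = ξ (χ.length + 1) i * B χ i)
    (χ : List Bool) (i : ℤ) :
    B (χ ++ [false]) i = B (χ ++ [true]) i * ξ 1 (i + (χ.count true : ℤ)) := by
  induction χ generalizing i with
  | nil => simp [hBs, hBm]
  | cons b χ ih =>
    cases b
    · rw [List.cons_append, List.cons_append, hBmw _ _ (by simp), hBmw _ _ (by simp), ih]
      simp [mul_assoc]
    · rw [List.cons_append, List.cons_append, hBsw _ _ (by simp), hBsw _ _ (by simp), ih,
        List.count_cons_self, Nat.cast_succ, add_assoc, add_comm 1]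

/-- The letter `s` is encoded as `true` and `m` as `false`. -/
theorem bracket_append_identity (L : ℕ) (ξ : ℕ → ℤ → ℂ)
    (B : List Bool → ℤ → ℂ)
    (hBs : ∀ i : ℤ, B [true] i = 1)
    (hBm : ∀ i : ℤ, B [false] i = ξ 1 i)
    (hBsw : ∀ (χ : List Bool) (i : ℤ), χ ≠ [] → B (true :: χ) i = B χ (i + 1))
    (hBmw : ∀ (χ : List Bool) (i : ℤ), χ ≠ [] →
      B (false :: χ) i = ξ (χ.length + 1) i * B χ i) :
    ∀ (χ : List Bool) (i : ℤ), 1 ≤ χ.length → χ.length ≤ L - 1 →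
      B (χ ++ [false]) i = B (χ ++ [true]) i * ξ 1 (i + (χ.count true : ℤ)) :=
  fun χ i _ _ => bracket_append_false_eq_mul ξ B hBs hBm hBsw hBmw χ i
end

section
/- Let M, K, N be positive integers and let I, V : ℤ × ℤ → ℂ (written I_n^t, V_n^t) satisfy the periodicity I_{n+N}^t = I_n^t, V_{n+N}^t = V_n^t and equation (kdv1): I_n^t = I_{n−1}^{t−M} + V_n^{t−K} − V_{n−1}^t for all n,t ∈ ℤ. Then for every t ∈ ℤ, ∑_{n=1}^{N} I_n^t + ∑_{n=1}^{N} V_n^t = ∑_{n=1}^{N} I_n^{t−M} + ∑_{n=1}^{N} V_n^{t−K}. In particular, when M = K = 1 and N = 2, the quantity I_1^t + I_2^t + V_1^t + V_2^t is independent of t (the hidden conserved quantity of the case M = K = 1, N = 2). -/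
open Finset Function

theorem sum_range_comp_add_one_of_periodic {α : Type*} [AddCancelCommMonoid α] {f : ℤ → α}
    {N : ℕ} (hf : Periodic f N) :
    ∑ n ∈ range N, f (n + 1) = ∑ n ∈ range N, f n := by
  have h := (sum_range_succ' (fun n : ℕ ↦ f n) N).symm.trans (sum_range_succ _ N)
  push_cast at h
  rw [show f N = f 0 by simpa using hf 0] at h
  exact add_right_cancel h

/-- Over a full period the shifted sums of `I_{n-1}` and `V_{n-1}` equal the unshifted ones,
so summing (kdv1) leaves only the four period sums. -/
theorem sum_kdv1_over_period {α : Type*} [AddCommGroup α] (M K N : ℕ) (I V : ℤ → ℤ → α)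
    (hIper : ∀ n t : ℤ, I (n + N) t = I n t)
    (hVper : ∀ n t : ℤ, V (n + N) t = V n t)
    (hkdv1 : ∀ n t : ℤ, I n t = I (n - 1) (t - M) + V n (t - K) - V (n - 1) t) (t : ℤ) :
    (∑ n ∈ range N, I ((n : ℤ) + 1) t) + (∑ n ∈ range N, V ((n : ℤ) + 1) t) =
      (∑ n ∈ range N, I ((n : ℤ) + 1) (t - M)) + (∑ n ∈ range N, V ((n : ℤ) + 1) (t - K)) := by
  have hsum : ∑ n ∈ range N, I ((n : ℤ) + 1) t =
      ∑ n ∈ range N, I n (t - M) + ∑ n ∈ range N, V ((n : ℤ) + 1) (t - K) -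
        ∑ n ∈ range N, V n t := by
    rw [← sum_add_distrib, ← sum_sub_distrib]
    refine sum_congr rfl fun n _ ↦ ?_
    simpa using hkdv1 (n + 1) t
  have hI := sum_range_comp_add_one_of_periodic (f := (I · (t - M))) (hIper · (t - M))
  have hV := sum_range_comp_add_one_of_periodic (f := (V · t)) (hVper · t)
  rw [hsum, hI, hV]
  abel

theorem hidden_conserved_quantity_general (M K N : ℕ)
    (I V : ℤ → ℤ → ℂ)
    (hIper : ∀ n t : ℤ, I (n + N) t = I n t)
    (hVper : ∀ n t : ℤ, V (n + N) t = V n t)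
    (hkdv1 : ∀ n t : ℤ, I n t = I (n - 1) (t - M) + V n (t - K) - V (n - 1) t) :
    (∀ t : ℤ,
      (∑ n ∈ Finset.range N, I ((n : ℤ) + 1) t) +
        (∑ n ∈ Finset.range N, V ((n : ℤ) + 1) t) =
      (∑ n ∈ Finset.range N, I ((n : ℤ) + 1) (t - M)) +
        (∑ n ∈ Finset.range N, V ((n : ℤ) + 1) (t - K))) ∧
    (M = 1 → K = 1 → N = 2 →
      ∀ t : ℤ, I 1 t + I 2 t + V 1 t + V 2 t = I 1 0 + I 2 0 + V 1 0 + V 2 0) := by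
  have hsum := sum_kdv1_over_period M K N I V hIper hVper hkdv1
  refine ⟨hsum, ?_⟩
  rintro rfl rfl rfl
  set Q : ℤ → ℂ := fun t ↦ I 1 t + I 2 t + V 1 t + V 2 t
  have hQ : Periodic Q 1 := fun t ↦ by
    have h := hsum (t + 1)
    norm_num [sum_range_succ] at h
    linear_combination h
  intro t
  simpa using hQ.int_mul_eq t

/-- summing (kdv1) over a period gives
`∑ I_n^t + ∑ V_n^t = ∑ I_n^{t-M} + ∑ V_n^{t-K}`; in particular for `M = K = 1`, `N = 2`
the quantity `I_1^t + I_2^t + V_1^t + V_2^t` is independent of `t`. -/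
theorem hidden_conserved_quantity (M K N : ℕ) (hM : 0 < M) (hK : 0 < K) (hN : 0 < N)
    (I V : ℤ → ℤ → ℂ)
    (hIper : ∀ n t : ℤ, I (n + N) t = I n t)
    (hVper : ∀ n t : ℤ, V (n + N) t = V n t)
    (hkdv1 : ∀ n t : ℤ, I n t = I (n - 1) (t - M) + V n (t - K) - V (n - 1) t) :
    (∀ t : ℤ,
      (∑ n ∈ Finset.range N, I ((n : ℤ) + 1) t) +
        (∑ n ∈ Finset.range N, V ((n : ℤ) + 1) t) =
      (∑ n ∈ Finset.range N, I ((n : ℤ) + 1) (t - M)) +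
        (∑ n ∈ Finset.range N, V ((n : ℤ) + 1) (t - K))) ∧
    (M = 1 → K = 1 → N = 2 →
      ∀ t : ℤ, I 1 t + I 2 t + V 1 t + V 2 t = I 1 0 + I 2 0 + V 1 0 + V 2 0) :=
  hidden_conserved_quantity_general M K N I V hIper hVper hkdv1
end

section
/- Let M, K, N be positive integers with gcd(M,K) = 1 and N ≥ 2, and let I, V : ℤ × ℤ → ℂ (written I_n^t, V_n^t) satisfy the periodicity I_{n+N}^t = I_n^t, V_{n+N}^t = V_n^t and the Lax equations L_s(y) R_s(y) = R_{s−M}(y) L_{s−K}(y) for all s ∈ ℤ and all y ∈ ℂ. Then for every t ∈ ℤ the multiset of M+K complex numbers { ∏_{n=1}^{N} V_n^{t−jM} : 0 ≤ j ≤ K−1 } ∪ { ∏_{n=1}^{N} I_n^{t−jK} : 0 ≤ j ≤ M−1 } (counted with multiplicities) is equal to the corresponding multiset with t replaced by t+1; i.e. this multiset is invariant under the time evolution. -/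
/-- The multiset `{ ∏_n V_n^{t-jM} : 0 ≤ j ≤ K-1 } ∪ { ∏_n I_n^{t-jK} : 0 ≤ j ≤ M-1 }`
of `M + K` complex numbers, counted with multiplicities. -/
noncomputable def specMultiset (M K N : ℕ) (I V : ℤ → ℤ → ℂ) (t : ℤ) : Multiset ℂ :=
  ((Multiset.range K).map fun j =>
      ∏ n ∈ Finset.range N, V ((n : ℤ) + 1) (t - (j : ℤ) * (M : ℤ))) +
  ((Multiset.range M).map fun j =>
      ∏ n ∈ Finset.range N, I ((n : ℤ) + 1) (t - (j : ℤ) * (K : ℤ)))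

open Matrix Finset

theorem det_bandM_zero (N : ℕ) (d : ℤ → ℂ) :
    (bandM N d 0).det = ∏ i ∈ range N, d ((i : ℤ) + 1) := by
  rw [det_of_isUpperTriangular, ← Fin.prod_univ_eq_prod_range (fun i => d ((i : ℤ) + 1))]
  · simp [bandM]
  · intro i j (hji : j < i)
    simp [bandM, hji.ne', show (i : ℕ) + 1 ≠ j by omega]

theorem bandM_eq_updateRow (n : ℕ) (d : ℤ → ℂ) (y : ℂ) :
    bandM (n + 1) d y = updateRow (bandM (n + 1) d 0) (Fin.last n)
      (bandM (n + 1) d 0 (Fin.last n) + y • Pi.single 0 1) := by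
  ext i j
  rcases eq_or_ne i (Fin.last n) with rfl | hi
  · simp only [bandM, updateRow_self, Pi.add_apply, Pi.smul_apply, of_apply, Pi.single_apply]
    simp
  · have : (i : ℕ) ≠ n := fun h => hi (Fin.ext h)
    simp only [bandM, updateRow_ne hi, of_apply]
    simp [this]

theorem det_updateRow_bandM_zero_last (n : ℕ) (d : ℤ → ℂ) :
    (updateRow (bandM (n + 1) d 0) (Fin.last n) (Pi.single 0 1)).det = (-1) ^ n := by
  rw [det_succ_row _ (Fin.last n), Fintype.sum_eq_single 0]
  · have hlow : ((updateRow (bandM (n + 1) d 0) (Fin.last n) (Pi.single 0 1)).submatrix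
        (Fin.last n).succAbove (Fin.succAbove 0)).BlockTriangular OrderDual.toDual := by
      intro i j (hij : i < j)
      simp only [submatrix_apply, Fin.succAbove_last, Fin.succAbove_zero,
        updateRow_ne (Fin.castSucc_lt_last i).ne, bandM, of_apply]
      simp [Fin.ext_iff, Fin.val_ne_of_ne hij.ne]
      omega
    rw [det_of_isLowerTriangular _ hlow, prod_eq_one]
    · simp
    · intro i _
      simp only [submatrix_apply, Fin.succAbove_last, Fin.succAbove_zero,
        updateRow_ne (Fin.castSucc_lt_last i).ne, bandM, of_apply]
      simp [Fin.ext_iff]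
  · intro j hj
    simp [hj]

theorem det_bandM (n : ℕ) (d : ℤ → ℂ) (y : ℂ) :
    (bandM (n + 1) d y).det = ∏ i ∈ range (n + 1), d ((i : ℤ) + 1) + (-1) ^ n * y := by
  rw [bandM_eq_updateRow, det_updateRow_add, det_updateRow_smul, updateRow_eq_self,
    det_bandM_zero, det_updateRow_bandM_zero_last, mul_comm y]

theorem Multiset.pair_eq_pair_of_forall_add_mul_add_eq {R : Type*} [CommRing R]
    [NoZeroDivisors R] {a b c d : R} (h : ∀ z, (a + z) * (b + z) = (c + z) * (d + z)) :
    ({a, b} : Multiset R) = {c, d} := by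
  have hp : a * b = c * d := by simpa using h 0
  have hs : a + b = c + d := by linear_combination h 1 - h 0
  rcases mul_eq_zero.1 (show (a - c) * (a - d) = 0 by linear_combination a * hs - hp) with h | h
  · obtain rfl : a = c := sub_eq_zero.1 h
    rw [add_left_cancel hs]
  · obtain rfl : a = d := sub_eq_zero.1 h
    rw [add_comm c, add_left_cancel_iff] at hs
    rw [hs, Multiset.pair_comm]

theorem pair_prod_eq_of_bandM_mul_eq {N : ℕ} {a b c e : ℤ → ℂ}
    (h : ∀ y, bandM N a y * bandM N b y = bandM N c y * bandM N e y) :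
    ({∏ i ∈ range N, a (i + 1), ∏ i ∈ range N, b (i + 1)} : Multiset ℂ) =
      {∏ i ∈ range N, c (i + 1), ∏ i ∈ range N, e (i + 1)} := by
  rcases N with _ | n
  · simp
  have hsign : (-1 : ℂ) ^ n * (-1) ^ n = 1 := by rw [← mul_pow, neg_one_mul, neg_neg, one_pow]
  refine Multiset.pair_eq_pair_of_forall_add_mul_add_eq fun z => ?_
  simpa only [det_mul, det_bandM, ← mul_assoc, hsign, one_mul] using
    congrArg det (h ((-1) ^ n * z))

theorem Function.Periodic.periodic_one_of_isCoprime {α : Type*} {f : ℤ → α} {a b : ℤ}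
    (hab : IsCoprime a b) (ha : Function.Periodic f a) (hb : Function.Periodic f b) :
    Function.Periodic f 1 := by
  obtain ⟨u, v, huv⟩ := hab
  rw [← huv]
  exact (ha.int_mul u).add_period (hb.int_mul v)

section WindowSum

variable {A : Type*} [AddCancelCommMonoid A]

def windowSum (f g : ℤ → A) (M K : ℕ) (t : ℤ) : A :=
  ∑ j ∈ range K, f (t - j * M) + ∑ j ∈ range M, g (t - j * K)

theorem windowSum_comm (f g : ℤ → A) (M K : ℕ) : windowSum f g M K = windowSum g f K M :=
  funext fun _ => add_comm _ _

theorem sum_range_sub_mul_add (f : ℤ → A) (c : ℤ) (K : ℕ) (s : ℤ) :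
    ∑ j ∈ range K, f (s - j * c) + f (s - K * c) = f s + ∑ j ∈ range K, f (s - c - j * c) := by
  rw [← sum_range_succ, sum_range_succ', add_comm]
  simp only [Nat.cast_zero, zero_mul, sub_zero, Nat.cast_succ, sub_sub, add_mul, one_mul, add_comm]

theorem sum_range_exchange {f g : ℤ → A} {M K : ℤ}
    (rel : ∀ s, f s + g s = g (s - M) + f (s - K)) (m : ℕ) (s : ℤ) :
    ∑ j ∈ range m, g (s - j * K) + f s = f (s - m * K) + ∑ j ∈ range m, g (s - M - j * K) := by
  induction m with
  | zero => simp [add_comm]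
  | succ m ih =>
    calc ∑ j ∈ range (m + 1), g (s - j * K) + f s
        = (∑ j ∈ range m, g (s - j * K) + f s) + g (s - m * K) := by
          rw [sum_range_succ, add_right_comm]
      _ = (f (s - m * K) + g (s - m * K)) + ∑ j ∈ range m, g (s - M - j * K) := by
          rw [ih, add_right_comm, add_comm (f _)]
      _ = f (s - (m + 1 : ℕ) * K) + ∑ j ∈ range (m + 1), g (s - M - j * K) := by
          rw [rel, sum_range_succ, add_comm (g _), add_assoc, add_comm (g _)]
          push_cast
          ring_nf

theorem windowSum_periodic_left {f g : ℤ → A} {M K : ℕ}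
    (rel : ∀ s, f s + g s = g (s - M) + f (s - K)) :
    Function.Periodic (windowSum f g M K) M := by
  intro t
  have hshift := sum_range_sub_mul_add f M K (t + M)
  have hexchange := sum_range_exchange rel M (t + M)
  rw [add_sub_cancel_right] at hshift hexchange
  rw [mul_comm (M : ℤ)] at hexchange
  apply add_right_cancel (b := f (t + M - K * M) + f (t + M))
  calc windowSum f g M K (t + M) + (f (t + M - K * M) + f (t + M))
      = (∑ j ∈ range K, f (t + M - j * M) + f (t + M - K * M)) +
          (∑ j ∈ range M, g (t + M - j * K) + f (t + M)) := by
        rw [windowSum]; abel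
    _ = windowSum f g M K t + (f (t + M - K * M) + f (t + M)) := by
        rw [hshift, hexchange, windowSum]; abel

theorem windowSum_periodic_right {f g : ℤ → A} {M K : ℕ}
    (rel : ∀ s, f s + g s = g (s - M) + f (s - K)) :
    Function.Periodic (windowSum f g M K) K := by
  rw [windowSum_comm]
  exact windowSum_periodic_left fun s => by rw [add_comm, rel, add_comm]

end WindowSum

theorem spec_multiset_invariant_general (M K N : ℕ)
    (hMK : Nat.Coprime M K)
    (I V : ℤ → ℤ → ℂ)
    (hLax : ∀ (s : ℤ) (y : ℂ),
      bandM N (fun n => V n s) y * bandM N (fun n => I n s) y =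
        bandM N (fun n => I n (s - M)) y * bandM N (fun n => V n (s - K)) y) :
    ∀ t : ℤ, specMultiset M K N I V (t + 1) = specMultiset M K N I V t := by
  set F : ℤ → Multiset ℂ := fun s => {∏ n ∈ range N, V ((n : ℤ) + 1) s}
  set G : ℤ → Multiset ℂ := fun s => {∏ n ∈ range N, I ((n : ℤ) + 1) s}
  have rel (s : ℤ) : F s + G s = G (s - M) + F (s - K) := by
    simpa only [F, G, Multiset.insert_eq_cons, Multiset.singleton_add] using
      pair_prod_eq_of_bandM_mul_eq (hLax s)
  have hspec : specMultiset M K N I V = windowSum F G M K := by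
    ext1 t
    simp only [specMultiset, Multiset.pure_def, Multiset.bind_def, Multiset.bind_singleton,
      Multiset.map_map, Function.comp_apply, windowSum, sum_eq_multiset_sum, range_val, F, G]
    congr 1 <;> exact (Multiset.bind_singleton _ _).symm
  rw [hspec]
  exact ((windowSum_periodic_left rel).periodic_one_of_isCoprime
    (Nat.isCoprime_iff_coprime.2 hMK) (windowSum_periodic_right rel))

/-- Remark 2.1: under the periodic Lax equations with `gcd(M,K) = 1`,
the multiset of the `M+K` products is invariant under the time evolution. -/
theorem spec_multiset_invariant (M K N : ℕ) (hM : 0 < M) (hK : 0 < K)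
    (hMK : Nat.Coprime M K) (hN : 2 ≤ N)
    (I V : ℤ → ℤ → ℂ)
    (hIper : ∀ n t : ℤ, I (n + N) t = I n t)
    (hVper : ∀ n t : ℤ, V (n + N) t = V n t)
    (hLax : ∀ (s : ℤ) (y : ℂ),
      bandM N (fun n => V n s) y * bandM N (fun n => I n s) y =
        bandM N (fun n => I n (s - M)) y * bandM N (fun n => V n (s - K)) y) :
    ∀ t : ℤ, specMultiset M K N I V (t + 1) = specMultiset M K N I V t :=
  spec_multiset_invariant_general M K N hMK I V hLax
end
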